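/- Suppose the state functions x1, x2, x3, x4 : ℝ → ℝ are differentiable and satisfy the linear system x1'(t) = x2(t), x2'(t) = v1(t), x3'(t) = x4(t), x4'(t) = v2(t), and that cos(x1(t)) ≠ 0 for all t. Let c1 > 0 and c2 > 0 be real constants. If the stabilizing controls are chosen as v1(t) = −g1(t) − c1·q_a(t) and v2(t) = (−g2(t) − c2·r_a(t))/cos(x1(t)), then for all t ≥ 0 the sensor angular velocities satisfy q_a(t) = q_a(0)·exp(−c1·t) and r_a(t) = r_a(0)·exp(−c2·t); in particular q_a(t) → 0 and r_a(t) → 0 as t → ∞, achieving line-of-sight stabilization at exponential rates c1 and c2. -/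

import Mathlib

/-!
Differentiating the sensor rates along the dynamics gives `q_a' = g1 + v1` and
`r_a' = g2 + v2 cos x1`; the chosen controls cancel `g1`, `g2` (the division by `cos x1`
being legitimate since it never vanishes) and leave the scalar equations `q_a' = -c1 q_a`,
`r_a' = -c2 r_a`. A solution `f` of `f' = -c f` has `f t · exp (c t)` constant, hence
`f t = f 0 · exp (-c t)`, which tends to `0` for `c > 0`.
-/

open Real Filter Topology

theorem eq_mul_exp_of_hasDerivAt_neg_mul {f : ℝ → ℝ} {c : ℝ}
    (hf : ∀ t, HasDerivAt f (-c * f t) t) (t : ℝ) :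
    f t = f 0 * exp (-c * t) := by
  have hderiv : ∀ s, HasDerivAt (fun s => f s * exp (c * s)) 0 s := fun s => by
    have hexp : HasDerivAt (fun s => exp (c * s)) (exp (c * s) * c) s :=
      ((hasDerivAt_id s).const_mul c).exp.congr_deriv (by simp)
    exact ((hf s).fun_mul hexp).congr_deriv (by ring)
  have hconst : f t * exp (c * t) = f 0 * exp (c * 0) :=
    is_const_of_deriv_eq_zero (fun s => (hderiv s).differentiableAt)
      (fun s => (hderiv s).deriv) t 0
  rw [mul_zero, exp_zero, mul_one] at hconst
  rw [← hconst, mul_assoc, ← exp_add, neg_mul, add_neg_cancel, exp_zero, mul_one]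

theorem tendsto_const_mul_exp_neg_mul_atTop {c : ℝ} (hc : 0 < c) (a : ℝ) :
    Tendsto (fun t => a * exp (-c * t)) atTop (𝓝 0) := by
  have hexp : Tendsto (fun t => exp (-c * t)) atTop (𝓝 0) :=
    tendsto_exp_comp_nhds_zero.2 (tendsto_id.const_mul_atTop_of_neg (neg_neg_of_pos hc))
  simpa using hexp.const_mul a

section SensorRates

variable {p q r x1 x2 x3 x4 : ℝ → ℝ} {t p' q' r' a b : ℝ}

theorem hasDerivAt_pitch_rate (hp : HasDerivAt p p' t) (hq : HasDerivAt q q' t)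
    (hx2 : HasDerivAt x2 a t) (hx3 : HasDerivAt x3 (x4 t) t) :
    HasDerivAt (fun s => -(p s) * sin (x3 s) + q s * cos (x3 s) + x2 s)
      (-p' * sin (x3 t) - x4 t * p t * cos (x3 t)
        + q' * cos (x3 t) - x4 t * q t * sin (x3 t) + a) t :=
  (((hp.fun_neg.fun_mul hx3.sin).fun_add (hq.fun_mul hx3.cos)).fun_add hx2).congr_deriv
    (by ring)

theorem hasDerivAt_yaw_rate (hp : HasDerivAt p p' t) (hq : HasDerivAt q q' t)
    (hr : HasDerivAt r r' t) (hx1 : HasDerivAt x1 (x2 t) t)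
    (hx3 : HasDerivAt x3 (x4 t) t) (hx4 : HasDerivAt x4 b t) :
    HasDerivAt (fun s => p s * cos (x3 s) * sin (x1 s) + q s * sin (x3 s) * sin (x1 s)
        + r s * cos (x1 s) + x4 s * cos (x1 s))
      ((p' * cos (x3 t) - x4 t * p t * sin (x3 t) + q' * sin (x3 t)
          + x4 t * q t * cos (x3 t)) * sin (x1 t)
        + (p t * cos (x3 t) + q t * sin (x3 t)) * x2 t * cos (x1 t)
        - x2 t * r t * sin (x1 t) - x2 t * x4 t * sin (x1 t)
        + r' * cos (x1 t) + b * cos (x1 t)) t :=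
  ((((hp.fun_mul hx3.cos).fun_mul hx1.sin).fun_add
    ((hq.fun_mul hx3.sin).fun_mul hx1.sin)).fun_add (hr.fun_mul hx1.cos)).fun_add
    (hx4.fun_mul hx1.cos) |>.congr_deriv (by ring)

end SensorRates

/-- Corollary 1: the stabilizing controls drive the sensor angular velocities
`q_a` and `r_a` to zero exponentially with rates `c1` and `c2`, achieving
line-of-sight stabilization; in particular they tend to `0` at infinity. -/
theorem los_stabilization
    (p q r p' q' r' : ℝ → ℝ)
    (hp : ∀ t, HasDerivAt p (p' t) t)
    (hq : ∀ t, HasDerivAt q (q' t) t)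
    (hr : ∀ t, HasDerivAt r (r' t) t)
    (x1 x2 x3 x4 v1 v2 g1 g2 qa ra : ℝ → ℝ)
    (hx1 : ∀ t, HasDerivAt x1 (x2 t) t)
    (hx2 : ∀ t, HasDerivAt x2 (v1 t) t)
    (hx3 : ∀ t, HasDerivAt x3 (x4 t) t)
    (hx4 : ∀ t, HasDerivAt x4 (v2 t) t)
    (hcos : ∀ t, cos (x1 t) ≠ 0)
    (hqa : ∀ t, qa t = -(p t) * sin (x3 t) + q t * cos (x3 t) + x2 t)
    (hra : ∀ t, ra t =
      p t * cos (x3 t) * sin (x1 t) + q t * sin (x3 t) * sin (x1 t)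
        + r t * cos (x1 t) + x4 t * cos (x1 t))
    (hg1 : ∀ t, g1 t =
      -p' t * sin (x3 t) - x4 t * p t * cos (x3 t)
        + q' t * cos (x3 t) - x4 t * q t * sin (x3 t))
    (hg2 : ∀ t, g2 t =
      (p' t * cos (x3 t) - x4 t * p t * sin (x3 t) + q' t * sin (x3 t)
          + x4 t * q t * cos (x3 t)) * sin (x1 t)
        + (p t * cos (x3 t) + q t * sin (x3 t)) * x2 t * cos (x1 t)
        - x2 t * r t * sin (x1 t) - x2 t * x4 t * sin (x1 t)
        + r' t * cos (x1 t))
    (c1 c2 : ℝ) (hc1 : 0 < c1) (hc2 : 0 < c2)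
    (hv1 : ∀ t, v1 t = -g1 t - c1 * qa t)
    (hv2 : ∀ t, v2 t = (-g2 t - c2 * ra t) / cos (x1 t)) :
    (∀ t, 0 ≤ t →
      qa t = qa 0 * exp (-c1 * t) ∧ ra t = ra 0 * exp (-c2 * t)) ∧
    Filter.Tendsto qa Filter.atTop (nhds 0) ∧
    Filter.Tendsto ra Filter.atTop (nhds 0) := by
  have hqa_ode : ∀ t, HasDerivAt qa (-c1 * qa t) t := fun t => by
    rw [funext hqa]
    convert hasDerivAt_pitch_rate (hp t) (hq t) (hx2 t) (hx3 t) using 1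
    rw [hv1, hg1, hqa]
    ring
  have hra_ode : ∀ t, HasDerivAt ra (-c2 * ra t) t := fun t => by
    rw [funext hra]
    convert hasDerivAt_yaw_rate (hp t) (hq t) (hr t) (hx1 t) (hx3 t) (hx4 t) using 1
    rw [hv2, div_mul_cancel₀ _ (hcos t), hg2, hra]
    ring
  have hqa_sol := eq_mul_exp_of_hasDerivAt_neg_mul hqa_ode
  have hra_sol := eq_mul_exp_of_hasDerivAt_neg_mul hra_ode
  refine ⟨fun t _ => ⟨hqa_sol t, hra_sol t⟩, ?_, ?_⟩
  · simpa only [← funext hqa_sol] using tendsto_const_mul_exp_neg_mul_atTop hc1 (qa 0)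
  · simpa only [← funext hra_sol] using tendsto_const_mul_exp_neg_mul_atTop hc2 (ra 0)
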